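/- For any fixed x ∈ ℝ and b > 0, lim_{N→∞} (1/N)·log( -x·Φ(-√N·x/b) + (b/√(2πN))·e^{-N x²/(2b²)} ) = -(max(x,0))²/(2b²). -/

import Mathlib

/-!
With `Z` a standard Gaussian, `G u = 𝔼[(Z - u)⁺] = φ u - u Φ(-u)`, the quantity inside the
logarithm is `(b / √N) G(√N x / b)`. For `c < 0`, `G(r c) / r → -c`, so the logarithm stays
bounded. For `c ≥ 0` we have `φ(u + 2) ≤ G u ≤ φ u` when `u ≥ 0`, and both bounds at `u = r c`
have logarithm `-r² c² / 2 + O(r + log r)`.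
-/

open MeasureTheory ProbabilityTheory Real Set Filter

/-- The cumulative distribution function of a standard Gaussian random variable. -/
noncomputable def stdGaussianCDF (x : ℝ) : ℝ :=
  ((gaussianReal 0 1) (Set.Iic x)).toReal

open Topology

noncomputable def stdGaussianPDF (t : ℝ) : ℝ := (√(2 * π))⁻¹ * exp (-t ^ 2 / 2)

/-- The normal loss function `u ↦ 𝔼[(Z - u)⁺]` of a standard Gaussian `Z`. -/
noncomputable def stdGaussianLoss (u : ℝ) : ℝ := stdGaussianPDF u - u * stdGaussianCDF (-u)

lemma stdGaussianPDF_pos (t : ℝ) : 0 < stdGaussianPDF t := by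
  unfold stdGaussianPDF; positivity

lemma stdGaussianPDF_neg (t : ℝ) : stdGaussianPDF (-t) = stdGaussianPDF t := by
  simp [stdGaussianPDF]

lemma stdGaussianPDF_le_of_sq_le {s t : ℝ} (h : s ^ 2 ≤ t ^ 2) :
    stdGaussianPDF t ≤ stdGaussianPDF s := by
  unfold stdGaussianPDF
  gcongr

lemma log_stdGaussianPDF (t : ℝ) : log (stdGaussianPDF t) = -log √(2 * π) - t ^ 2 / 2 := by
  rw [stdGaussianPDF, log_mul (by positivity) (exp_ne_zero _), log_inv, log_exp]
  ring

lemma gaussianPDFReal_zero_one : gaussianPDFReal 0 1 = stdGaussianPDF := by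
  funext t
  simp [gaussianPDFReal, stdGaussianPDF]

lemma integrable_stdGaussianPDF : Integrable stdGaussianPDF :=
  gaussianPDFReal_zero_one ▸ integrable_gaussianPDFReal 0 1

lemma integrable_mul_stdGaussianPDF : Integrable fun t => t * stdGaussianPDF t :=
  ((integrable_mul_exp_neg_mul_sq (b := 1 / 2) (by norm_num)).const_mul (√(2 * π))⁻¹).congr
    (.of_forall fun t => by simp only [stdGaussianPDF]; ring_nf)

lemma stdGaussianCDF_nonneg (y : ℝ) : 0 ≤ stdGaussianCDF y := ENNReal.toReal_nonneg

lemma stdGaussianCDF_eq_integral (y : ℝ) : stdGaussianCDF y = ∫ t in Iic y, stdGaussianPDF t := by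
  rw [stdGaussianCDF, gaussianReal_apply_eq_integral 0 one_ne_zero,
    ENNReal.toReal_ofReal (integral_nonneg fun t => gaussianPDFReal_nonneg 0 1 t),
    gaussianPDFReal_zero_one]

lemma stdGaussianCDF_neg_eq_integral (u : ℝ) :
    stdGaussianCDF (-u) = ∫ t in Ioi u, stdGaussianPDF t := by
  rw [stdGaussianCDF_eq_integral, ← neg_neg u, ← integral_comp_neg_Iic, neg_neg]
  simp only [stdGaussianPDF_neg]

lemma tendsto_stdGaussianCDF_atTop : Tendsto stdGaussianCDF atTop (𝓝 1) := by
  have h := tendsto_measure_Iic_atTop (gaussianReal 0 1)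
  rw [measure_univ] at h
  exact (ENNReal.tendsto_toReal ENNReal.one_ne_top).comp h

lemma tendsto_stdGaussianPDF_atTop : Tendsto stdGaussianPDF atTop (𝓝 0) := by
  have h := (tendsto_exp_neg_atTop_nhds_zero.comp
    ((tendsto_pow_atTop two_ne_zero).atTop_div_const two_pos)).const_mul (√(2 * π))⁻¹
  rw [mul_zero] at h
  exact h.congr fun t => by simp [stdGaussianPDF, neg_div]

lemma hasDerivAt_stdGaussianPDF (t : ℝ) :
    HasDerivAt stdGaussianPDF (-t * stdGaussianPDF t) t := by
  have h : HasDerivAt (fun s : ℝ => -s ^ 2 / 2) (-t) t := by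
    simpa using ((hasDerivAt_pow 2 t).neg.div_const 2).congr_deriv (by ring)
  exact (h.exp.const_mul (√(2 * π))⁻¹).congr_deriv (by simp only [stdGaussianPDF]; ring)

lemma integral_Ioi_mul_stdGaussianPDF (u : ℝ) :
    ∫ t in Ioi u, t * stdGaussianPDF t = stdGaussianPDF u := by
  have h := integral_Ioi_of_hasDerivAt_of_tendsto' (a := u)
    (fun t _ => by simpa using (hasDerivAt_stdGaussianPDF t).fun_neg)
    integrable_mul_stdGaussianPDF.integrableOn tendsto_stdGaussianPDF_atTop.neg
  simpa using h

lemma stdGaussianLoss_eq_integral (u : ℝ) :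
    stdGaussianLoss u = ∫ t in Ioi u, (t - u) * stdGaussianPDF t := by
  simp_rw [sub_mul]
  rw [integral_sub integrable_mul_stdGaussianPDF.integrableOn
    (integrable_stdGaussianPDF.const_mul u).integrableOn, integral_Ioi_mul_stdGaussianPDF,
    integral_const_mul, ← stdGaussianCDF_neg_eq_integral, stdGaussianLoss]

lemma stdGaussianLoss_le {u : ℝ} (hu : 0 ≤ u) : stdGaussianLoss u ≤ stdGaussianPDF u :=
  sub_le_self _ (mul_nonneg hu (stdGaussianCDF_nonneg _))

/-- On `[u + 1, u + 2]` the integrand `(t - u) * stdGaussianPDF t` is at least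
`stdGaussianPDF (u + 2)`. -/
lemma stdGaussianPDF_add_two_le_stdGaussianLoss {u : ℝ} (hu : 0 ≤ u) :
    stdGaussianPDF (u + 2) ≤ stdGaussianLoss u := by
  have hint : IntegrableOn (fun t => (t - u) * stdGaussianPDF t) (Ioi u) := by
    simp_rw [sub_mul]
    exact (integrable_mul_stdGaussianPDF.sub (integrable_stdGaussianPDF.const_mul u)).integrableOn
  have hsub : Ioc (u + 1) (u + 2) ⊆ Ioi u := fun t ht => by simp only [mem_Ioi]; linarith [ht.1]
  rw [stdGaussianLoss_eq_integral]
  calc stdGaussianPDF (u + 2) = ∫ _ in Ioc (u + 1) (u + 2), stdGaussianPDF (u + 2) := by norm_num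
    _ ≤ ∫ t in Ioc (u + 1) (u + 2), (t - u) * stdGaussianPDF t := by
      refine setIntegral_mono_on (integrableOn_const measure_Ioc_lt_top.ne)
        (hint.mono_set hsub) measurableSet_Ioc fun t ⟨ht1, ht2⟩ => ?_
      have hφ : stdGaussianPDF (u + 2) ≤ stdGaussianPDF t :=
        stdGaussianPDF_le_of_sq_le (by nlinarith)
      nlinarith [stdGaussianPDF_pos (u + 2)]
    _ ≤ ∫ t in Ioi u, (t - u) * stdGaussianPDF t :=
      setIntegral_mono_set hint ((ae_restrict_iff' measurableSet_Ioi).mpr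
        (.of_forall fun t ht => mul_nonneg (sub_nonneg.2 (le_of_lt ht)) (stdGaussianPDF_pos t).le))
        (.of_forall hsub)

lemma stdGaussianLoss_pos (u : ℝ) : 0 < stdGaussianLoss u := by
  rcases le_total 0 u with hu | hu
  · exact (stdGaussianPDF_pos _).trans_le (stdGaussianPDF_add_two_le_stdGaussianLoss hu)
  · rw [stdGaussianLoss]
    nlinarith [stdGaussianPDF_pos u, stdGaussianCDF_nonneg (-u)]

lemma tendsto_log_div_sq_atTop : Tendsto (fun r : ℝ => log r / r ^ 2) atTop (𝓝 0) := by
  have h := (tendsto_pow_log_div_mul_add_atTop 1 0 1 one_ne_zero).mul tendsto_inv_atTop_zero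
  rw [zero_mul] at h
  refine h.congr fun r => ?_
  simp only [pow_one, one_mul, add_zero]
  ring

lemma tendsto_log_stdGaussianPDF_div_div_sq (c d : ℝ) :
    Tendsto (fun r => log (stdGaussianPDF (r * c + d) / r) / r ^ 2) atTop (𝓝 (-c ^ 2 / 2)) := by
  have h := ((tendsto_const_nhds (x := -c ^ 2 / 2)).sub
    ((tendsto_inv_atTop_zero.comp (tendsto_pow_atTop two_ne_zero)).const_mul
      (log √(2 * π) + d ^ 2 / 2))).sub
    ((tendsto_inv_atTop_zero.const_mul (c * d)).add tendsto_log_div_sq_atTop)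
  simp only [mul_zero, add_zero, sub_zero] at h
  refine h.congr' ?_
  filter_upwards [eventually_gt_atTop 0] with r hr
  rw [log_div (stdGaussianPDF_pos _).ne' hr.ne', log_stdGaussianPDF, Function.comp_apply]
  field_simp
  ring

lemma tendsto_stdGaussianLoss_mul_div_of_neg {c : ℝ} (hc : c < 0) :
    Tendsto (fun r => stdGaussianLoss (r * c) / r) atTop (𝓝 (-c)) := by
  have hpdf : Tendsto (fun r => stdGaussianPDF (r * c) / r) atTop (𝓝 0) := by
    have h0 := tendsto_inv_atTop_zero.const_mul (stdGaussianPDF 0)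
    rw [mul_zero] at h0
    refine squeeze_zero' ?_ ?_ h0 <;> filter_upwards [eventually_gt_atTop 0] with r hr
    · exact div_nonneg (stdGaussianPDF_pos _).le hr.le
    · rw [div_eq_mul_inv]
      gcongr
      exact stdGaussianPDF_le_of_sq_le (by simpa using sq_nonneg (r * c))
  have hcdf : Tendsto (fun r => stdGaussianCDF (-(r * c))) atTop (𝓝 1) :=
    tendsto_stdGaussianCDF_atTop.comp
      ((tendsto_id.atTop_mul_const (neg_pos.2 hc)).congr fun r => by simp)
  have h := hpdf.sub (hcdf.const_mul c)
  rw [zero_sub, mul_one] at h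
  refine h.congr' ?_
  filter_upwards [eventually_gt_atTop 0] with r hr
  rw [stdGaussianLoss]
  field_simp

lemma tendsto_log_stdGaussianLoss_div_div_sq (c : ℝ) :
    Tendsto (fun r => log (stdGaussianLoss (r * c) / r) / r ^ 2) atTop
      (𝓝 (-(max c 0) ^ 2 / 2)) := by
  rcases lt_or_ge c 0 with hc | hc
  · have h := ((continuousAt_log (neg_pos.2 hc).ne').tendsto.comp
      (tendsto_stdGaussianLoss_mul_div_of_neg hc)).mul
      (tendsto_inv_atTop_zero.comp (tendsto_pow_atTop two_ne_zero))
    rw [mul_zero] at h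
    rw [max_eq_right hc.le, zero_pow two_ne_zero, neg_zero, zero_div]
    exact h.congr fun r => div_eq_mul_inv _ _ |>.symm
  · rw [max_eq_left hc]
    refine tendsto_of_tendsto_of_tendsto_of_le_of_le' (tendsto_log_stdGaussianPDF_div_div_sq c 2)
      (by simpa using tendsto_log_stdGaussianPDF_div_div_sq c 0) ?_ ?_ <;>
      filter_upwards [eventually_gt_atTop 0] with r hr <;>
      refine div_le_div_of_nonneg_right (log_le_log ?_ ?_) (sq_nonneg r)
    · exact div_pos (stdGaussianPDF_pos _) hr
    · exact div_le_div_of_nonneg_right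
        (stdGaussianPDF_add_two_le_stdGaussianLoss (by positivity)) hr.le
    · exact div_pos (stdGaussianLoss_pos _) hr
    · simpa using div_le_div_of_nonneg_right (stdGaussianLoss_le (by positivity)) hr.le

lemma neg_mul_stdGaussianCDF_add_eq_mul_stdGaussianLoss (x : ℝ) {b s : ℝ} (hb : b ≠ 0)
    (hs : 0 < s) :
    -x * stdGaussianCDF (-(√s * x / b)) + b / √(2 * π * s) * exp (-(s * x ^ 2) / (2 * b ^ 2))
      = b * (stdGaussianLoss (√s * (x / b)) / √s) := by
  have hexp : -(s * x ^ 2) / (2 * b ^ 2) = -(√s * (x / b)) ^ 2 / 2 := by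
    rw [mul_pow, sq_sqrt hs.le]
    field_simp
  have hs' : √s ≠ 0 := (sqrt_pos.2 hs).ne'
  rw [stdGaussianLoss, stdGaussianPDF, sqrt_mul (by positivity), mul_div_assoc, hexp]
  field_simp
  ring

/-- For fixed `x ∈ ℝ` and `b > 0`,
    `lim_{N→∞} (1/N) log( -x Φ(-√N x/b) + (b/√(2πN)) exp(-N x²/(2b²)) )
      = -(max(x,0))²/(2b²)`. -/
theorem gaussian_tail_log_limit' (x b : ℝ) (hb : 0 < b) :
    Tendsto (fun N : ℕ => (1 / (N : ℝ)) * Real.log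
        (-x * stdGaussianCDF (-(Real.sqrt N * x / b))
          + (b / Real.sqrt (2 * π * N)) * Real.exp (-((N : ℝ) * x ^ 2) / (2 * b ^ 2))))
      atTop (nhds (-(max x 0) ^ 2 / (2 * b ^ 2))) := by
  have hloss := (tendsto_log_stdGaussianLoss_div_div_sq (x / b)).comp
    (tendsto_sqrt_atTop.comp tendsto_natCast_atTop_atTop)
  have hlim : -(max x 0) ^ 2 / (2 * b ^ 2) = 0 + -(max (x / b) 0) ^ 2 / 2 := by
    rw [zero_add, show max (x / b) 0 = max x 0 / b by rw [← max_div_div_right hb.le, zero_div]]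
    field_simp
  rw [hlim]
  refine ((tendsto_const_div_atTop_nhds_zero_nat (log b)).add hloss).congr' ?_
  filter_upwards [eventually_gt_atTop 0] with N hN
  have hN : (0 : ℝ) < N := Nat.cast_pos.2 hN
  rw [neg_mul_stdGaussianCDF_add_eq_mul_stdGaussianLoss x hb.ne' hN,
    log_mul hb.ne' (div_pos (stdGaussianLoss_pos _) (sqrt_pos.2 hN)).ne', Function.comp_apply,
    Function.comp_apply, sq_sqrt hN.le]
  ring
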